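/- Update answer sets violate postulate (K5): there exists an update sequence (P⃗, P) with P satisfiable but (P⃗, P) unsatisfiable. Witness: P⃗ = { a ←, ¬a ← } and P = { b ← }. -/

import Mathlib

/-- A literal over atoms `α`: an atom or a strongly negated atom. -/
inductive Lit (α : Type) where
  | pos : α → Lit α
  | neg : α → Lit α

/-- The complementary literal. -/
def Lit.compl {α : Type} : Lit α → Lit α
  | .pos a => .neg a
  | .neg a => .pos a

/-- A rule of an extended logic program: optional head literal,
prerequisites `prem`, and weakly negated body literals `nbody`. -/
structure Rule (α : Type) where
  head : Option (Lit α)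
  prem : Set (Lit α)
  nbody : Set (Lit α)

/-- A set of literals is consistent iff it contains no complementary pair. -/
def Consistent {α : Type} (S : Set (Lit α)) : Prop :=
  ∀ a : α, ¬ (Lit.pos a ∈ S ∧ Lit.neg a ∈ S)

/-- The body of `r` is true in `S`. -/
def BodyTrue {α : Type} (S : Set (Lit α)) (r : Rule α) : Prop :=
  r.prem ⊆ S ∧ ∀ L ∈ r.nbody, L ∉ S

/-- The head of `r` is true in `S` (false for constraints). -/
def HeadTrue {α : Type} (S : Set (Lit α)) (r : Rule α) : Prop :=
  ∃ L, r.head = some L ∧ L ∈ S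

/-- Rule `r` is true in `S`. -/
def RuleTrue {α : Type} (S : Set (Lit α)) (r : Rule α) : Prop :=
  BodyTrue S r → HeadTrue S r

/-- `S` is a model of program `P`. -/
def IsModel {α : Type} (S : Set (Lit α)) (P : Set (Rule α)) : Prop :=
  ∀ r ∈ P, RuleTrue S r

/-- `r` is defeated by `S`. -/
def Defeated {α : Type} (S : Set (Lit α)) (r : Rule α) : Prop :=
  ∃ L ∈ r.nbody, L ∈ S

/-- The Gelfond–Lifschitz reduct of `P` relative to `S`. -/
def Reduct {α : Type} (P : Set (Rule α)) (S : Set (Lit α)) : Set (Rule α) :=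
  { r' | ∃ r ∈ P, ¬ Defeated S r ∧ r' = Rule.mk r.head r.prem ∅ }

/-- `S` is an answer set of `P`: a consistent set of literals that is a
minimal model of the reduct `P^S`. -/
def IsAnswerSet {α : Type} (P : Set (Rule α)) (S : Set (Lit α)) : Prop :=
  Consistent S ∧ IsModel S (Reduct P S) ∧
    ∀ T ⊆ S, IsModel T (Reduct P S) → T = S

/-- The belief set of `P`: all rules true in every answer set of `P`. -/
def Bel {α : Type} (P : Set (Rule α)) : Set (Rule α) :=
  { r | ∀ S, IsAnswerSet P S → RuleTrue S r }
/-- Extended alphabet `At*`: original atoms, indexed copies `A_i`,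
and rejection atoms `rej(r)` for (named copies of) rules. -/
inductive ExtAtom (α : Type) where
  | base : α → ExtAtom α
  | idx : ℕ → α → ExtAtom α
  | rej : ℕ → Rule α → ExtAtom α

/-- Lift a literal over `α` to the corresponding literal over `At*`. -/
def liftLit {α : Type} : Lit α → Lit (ExtAtom α)
  | .pos a => .pos (.base a)
  | .neg a => .neg (.base a)

/-- The indexed copy `L_i` of a literal `L`. -/
def idxLit {α : Type} (i : ℕ) : Lit α → Lit (ExtAtom α)
  | .pos a => .pos (.idx i a)
  | .neg a => .neg (.idx i a)

/-- Literal `L` occurs in the update sequence `(P 0, …, P (n-1))`. -/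
def OccursIn {α : Type} (n : ℕ) (P : ℕ → Set (Rule α)) (L : Lit α) : Prop :=
  ∃ i < n, ∃ r ∈ P i, r.head = some L ∨ L ∈ r.prem ∨ L ∈ r.nbody

/-- The update program `P_◁` of the update sequence `(P 0, …, P (n-1))`,
an ELP over the extended alphabet `At*`. -/
def UpdProgram {α : Type} (n : ℕ) (P : ℕ → Set (Rule α)) : Set (Rule (ExtAtom α)) :=
  -- (i) all constraints
  { r' | ∃ i < n, ∃ r ∈ P i, r.head = none ∧
      r' = Rule.mk none (liftLit '' r.prem) (liftLit '' r.nbody) } ∪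
  -- (ii)  L_i ← B(r), not rej(r)
  { r' | ∃ i < n, ∃ r ∈ P i, ∃ L, r.head = some L ∧
      r' = Rule.mk (some (idxLit i L)) (liftLit '' r.prem)
             ((liftLit '' r.nbody) ∪ {Lit.pos (ExtAtom.rej i r)}) } ∪
  -- (iii)  rej(r) ← B(r), ¬L_{i+1}
  { r' | ∃ i, i + 1 < n ∧ ∃ r ∈ P i, ∃ L, r.head = some L ∧
      r' = Rule.mk (some (Lit.pos (ExtAtom.rej i r)))
             ((liftLit '' r.prem) ∪ {idxLit (i+1) L.compl}) (liftLit '' r.nbody) } ∪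
  -- (iv) inertia rules  L_i ← L_{i+1}  and  L ← L_1
  { r' | ∃ L, OccursIn n P L ∧
      ((∃ i, i + 1 < n ∧ r' = Rule.mk (some (idxLit i L)) {idxLit (i+1) L} ∅) ∨
        r' = Rule.mk (some (liftLit L)) {idxLit 0 L} ∅) }

/-- `S` is an update answer set of the sequence `(P 0, …, P (n-1))`:
the restriction to `Lit_At` of an answer set of the update program. -/
def UpdateAnswerSet {α : Type} (n : ℕ) (P : ℕ → Set (Rule α)) (S : Set (Lit α)) : Prop :=
  ∃ S' : Set (Lit (ExtAtom α)), IsAnswerSet (UpdProgram n P) S' ∧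
    S = { L | liftLit L ∈ S' }

/-- Two rules are conflicting iff their heads are complementary literals. -/
def Conflicting {α : Type} (r r' : Rule α) : Prop :=
  ∃ L, r.head = some L ∧ r'.head = some L.compl

/-- The founded rejection set at level `i`: rules of `P i` rejected by a
conflicting, itself non-rejected rule of some later program. -/
def RejLevel {α : Type} (n : ℕ) (P : ℕ → Set (Rule α)) (S : Set (Lit α)) (i : ℕ) :
    Set (Rule α) :=
  { r | r ∈ P i ∧ ∃ j, ∃ _ : i < j, ∃ _ : j < n, ∃ r',
      r' ∈ P j ∧ r' ∉ RejLevel n P S j ∧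
      Conflicting r r' ∧ BodyTrue S r ∧ BodyTrue S r' }
  termination_by n - i
  decreasing_by omega

/-- The founded rejection set `Rej(S, P⃗)`. -/
def Rej {α : Type} (n : ℕ) (P : ℕ → Set (Rule α)) (S : Set (Lit α)) : Set (Rule α) :=
  { r | ∃ i < n, r ∈ RejLevel n P S i }

/-- The union `∪P⃗` of all rules of the sequence. -/
def UnionSeq {α : Type} (n : ℕ) (P : ℕ → Set (Rule α)) : Set (Rule α) :=
  { r | ∃ i < n, r ∈ P i }

/-- Witness initial program `P⃗ = { a ←, ¬a ← }`. -/
def P1w : Set (Rule Bool) :=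
  {Rule.mk (some (Lit.pos true)) ∅ ∅, Rule.mk (some (Lit.neg true)) ∅ ∅}

/-- Witness update `P = { b ← }`. -/
def P2w : Set (Rule Bool) :=
  {Rule.mk (some (Lit.pos false)) ∅ ∅}

/-! In an answer set of the update program every literal is supported by a non-defeated rule
whose prerequisites hold. A rule with head `rej(r)`, for `r` in `P⃗`, requires the level-1 copy
of the complement of the head of `r`, and at the last level such a copy is supported only by a
rule of `P` with that head. As `b ←` conflicts with neither `a ←` nor `¬a ←`, no rule of `P⃗`
is rejected, so the inertia rules derive both `a` and `¬a`. -/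

def Rule.fact {α : Type} (L : Lit α) : Rule α := ⟨some L, ∅, ∅⟩

section AnswerSets

variable {α : Type} {P : Set (Rule α)} {S : Set (Lit α)}

theorem not_defeated_fact (L : Lit α) : ¬ Defeated S (Rule.fact L) :=
  fun ⟨_, h, _⟩ => h

theorem IsModel.head_mem_of_reduct {T : Set (Lit α)} (hT : IsModel T (Reduct P S)) {r : Rule α}
    (hr : r ∈ P) (hnd : ¬ Defeated S r) (hprem : r.prem ⊆ T) {L : Lit α}
    (hL : r.head = some L) : L ∈ T := by
  obtain ⟨M, hM, hMT⟩ := hT _ ⟨r, hr, hnd, rfl⟩ ⟨hprem, fun _ h => h.elim⟩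
  rw [hL, Option.some.injEq] at hM
  exact hM ▸ hMT

/-- Answer sets are supported: removing an unsupported literal would leave a smaller model
of the reduct. -/
theorem IsAnswerSet.exists_support (hS : IsAnswerSet P S) {L : Lit α} (hL : L ∈ S) :
    ∃ r ∈ P, ¬ Defeated S r ∧ r.prem ⊆ S ∧ r.head = some L := by
  by_contra! hunsupp
  have hmodel : IsModel (S \ {L}) (Reduct P S) := by
    rintro _ ⟨r, hr, hnd, rfl⟩ ⟨hprem, -⟩
    have hpremS : r.prem ⊆ S := hprem.trans Set.sdiff_subset
    obtain ⟨M, hM, hMS⟩ := hS.2.1 _ ⟨r, hr, hnd, rfl⟩ ⟨hpremS, fun _ h => h.elim⟩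
    refine ⟨M, hM, hMS, ?_⟩
    rintro rfl
    exact hunsupp r hr hnd hpremS hM
  have hdiff := hS.2.2 _ Set.sdiff_subset hmodel
  exact (hdiff.ge hL).2 rfl

theorem isAnswerSet_image_fact {F : Set (Lit α)} (hF : Consistent F) :
    IsAnswerSet (Rule.fact '' F) F := by
  have hmodel : ∀ T : Set (Lit α), IsModel T (Reduct (Rule.fact '' F) F) → F ⊆ T :=
    fun T hT L hL =>
      hT.head_mem_of_reduct ⟨L, hL, rfl⟩ (not_defeated_fact L) (Set.empty_subset _) rfl
  refine ⟨hF, ?_, fun T hTF hT => hTF.antisymm (hmodel T hT)⟩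
  rintro _ ⟨_, ⟨L, hL, rfl⟩, -, rfl⟩ -
  exact ⟨L, rfl, hL⟩

end AnswerSets

section UpdateProgram

variable {α : Type} {n : ℕ} {P : ℕ → Set (Rule α)}

@[simp]
theorem idxLit_inj {i j : ℕ} {L M : Lit α} : idxLit i L = idxLit j M ↔ i = j ∧ L = M := by
  cases L <;> cases M <;> simp [idxLit]

@[simp]
theorem liftLit_ne_idxLit (i : ℕ) (L M : Lit α) : liftLit M ≠ idxLit i L := by
  cases L <;> cases M <;> simp [idxLit, liftLit]

@[simp]
theorem idxLit_ne_rej (i j : ℕ) (L : Lit α) (r : Rule α) :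
    idxLit i L ≠ Lit.pos (ExtAtom.rej j r) := by
  cases L <;> simp [idxLit]

@[simp]
theorem rej_ne_idxLit (i j : ℕ) (L : Lit α) (r : Rule α) :
    Lit.pos (ExtAtom.rej j r) ≠ idxLit i L := by
  cases L <;> simp [idxLit]

@[simp]
theorem liftLit_ne_rej (j : ℕ) (L : Lit α) (r : Rule α) :
    liftLit L ≠ Lit.pos (ExtAtom.rej j r) := by
  cases L <;> simp [liftLit]

theorem UpdProgram.exists_of_head_eq_idxLit {r : Rule (ExtAtom α)} (hr : r ∈ UpdProgram n P)
    {j : ℕ} {L : Lit α} (hL : r.head = some (idxLit j L)) :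
    (∃ s ∈ P j, s.head = some L) ∨ j + 1 < n := by
  rcases hr with ((⟨_, _, _, _, _, rfl⟩ | ⟨i, _, s, hs, M, hM, rfl⟩) |
      ⟨_, _, _, _, _, _, rfl⟩) | ⟨M, _, ⟨i, hi, rfl⟩ | rfl⟩ <;>
    simp only [Option.some.injEq, reduceCtorEq, idxLit_inj, liftLit_ne_idxLit, rej_ne_idxLit]
      at hL
  · exact .inl ⟨s, hL.1 ▸ hs, hL.2 ▸ hM⟩
  · exact .inr (hL.1 ▸ hi)

theorem UpdProgram.exists_of_head_eq_rej {r : Rule (ExtAtom α)} (hr : r ∈ UpdProgram n P)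
    {i : ℕ} {s : Rule α} (hs : r.head = some (Lit.pos (ExtAtom.rej i s))) :
    ∃ L, s.head = some L ∧ idxLit (i + 1) L.compl ∈ r.prem := by
  rcases hr with ((⟨_, _, _, _, _, rfl⟩ | ⟨_, _, _, _, M, _, rfl⟩) |
      ⟨j, _, s', _, M, hM, rfl⟩) | ⟨M, _, ⟨_, _, rfl⟩ | rfl⟩ <;>
    simp only [Option.some.injEq, reduceCtorEq, idxLit_ne_rej, liftLit_ne_rej, Lit.pos.injEq,
      ExtAtom.rej.injEq] at hs
  obtain ⟨rfl, rfl⟩ := hs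
  exact ⟨M, hM, .inr rfl⟩

theorem exists_head_of_idxLit_last_mem {i : ℕ} {S' : Set (Lit (ExtAtom α))}
    (hS' : IsAnswerSet (UpdProgram (i + 1) P) S') {L : Lit α} (hL : idxLit i L ∈ S') :
    ∃ s ∈ P i, s.head = some L := by
  obtain ⟨r, hr, -, -, hrL⟩ := hS'.exists_support hL
  exact (UpdProgram.exists_of_head_eq_idxLit hr hrL).resolve_right (lt_irrefl _)

/-- In a sequence `(P 0, …, P i, P (i+1))`, a rule of `P i` is rejected only by a conflicting
rule of the last program. -/
theorem exists_conflicting_of_rej_mem {i : ℕ} {S' : Set (Lit (ExtAtom α))}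
    (hS' : IsAnswerSet (UpdProgram (i + 2) P) S') {s : Rule α}
    (hs : Lit.pos (ExtAtom.rej i s) ∈ S') : ∃ s' ∈ P (i + 1), Conflicting s s' := by
  obtain ⟨r, hr, -, hprem, hrs⟩ := hS'.exists_support hs
  obtain ⟨L, hL, hcompl⟩ := UpdProgram.exists_of_head_eq_rej hr hrs
  obtain ⟨s', hs', hs'L⟩ := exists_head_of_idxLit_last_mem hS' (hprem hcompl)
  exact ⟨s', hs', L, hL, hs'L⟩

theorem idxLit_mem_of_not_rej_mem {S' : Set (Lit (ExtAtom α))}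
    (hS' : IsModel S' (Reduct (UpdProgram n P) S')) {i : ℕ} (hi : i < n) {s : Rule α}
    (hs : s ∈ P i) {L : Lit α} (hL : s.head = some L) (hprem : liftLit '' s.prem ⊆ S')
    (hnbody : ∀ M ∈ s.nbody, liftLit M ∉ S') (hrej : Lit.pos (ExtAtom.rej i s) ∉ S') :
    idxLit i L ∈ S' := by
  refine hS'.head_mem_of_reduct (.inl (.inl (.inr ⟨i, hi, s, hs, L, hL, rfl⟩))) ?_ hprem rfl
  rintro ⟨_, (⟨M, hM, rfl⟩ | rfl), hMS⟩
  exacts [hnbody M hM hMS, hrej hMS]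

theorem liftLit_mem_of_idxLit_zero_mem {S' : Set (Lit (ExtAtom α))}
    (hS' : IsModel S' (Reduct (UpdProgram n P) S')) {L : Lit α} (hocc : OccursIn n P L)
    (hL : idxLit 0 L ∈ S') : liftLit L ∈ S' :=
  hS'.head_mem_of_reduct (.inr ⟨L, hocc, .inr rfl⟩) (fun ⟨_, h, _⟩ => h)
    (Set.singleton_subset_iff.mpr hL) rfl

end UpdateProgram

theorem P2w_satisfiable : ∃ S : Set (Lit Bool), IsAnswerSet P2w S := by
  refine ⟨{Lit.pos false}, ?_⟩
  have h := isAnswerSet_image_fact (F := {Lit.pos false}) fun _ ⟨_, h⟩ => nomatch h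
  rwa [Set.image_singleton] at h

theorem not_conflicting_of_mem_P1w_of_mem_P2w {s s' : Rule Bool} (hs : s ∈ P1w)
    (hs' : s' ∈ P2w) : ¬ Conflicting s s' := by
  rintro ⟨L, hL, hL'⟩
  rw [Set.mem_singleton_iff.mp hs'] at hL'
  rcases hs with rfl | rfl <;> cases hL <;> cases hL'

/-- postulate (K5) fails: `P` is satisfiable but the update
sequence `(P⃗, P)` has no update answer set. -/
theorem k5_fails :
    (∃ S : Set (Lit Bool), IsAnswerSet P2w S) ∧
    ¬ ∃ S : Set (Lit Bool),
        UpdateAnswerSet 2 (fun i => if i = 0 then P1w else P2w) S := by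
  refine ⟨P2w_satisfiable, ?_⟩
  rintro ⟨-, S', hS', -⟩
  have hnot_rej : ∀ s ∈ P1w, Lit.pos (ExtAtom.rej 0 s) ∉ S' := fun s hs h =>
    let ⟨_, hs', hss'⟩ := exists_conflicting_of_rej_mem (i := 0) hS' h
    not_conflicting_of_mem_P1w_of_mem_P2w hs hs' hss'
  have hlift : ∀ L, Rule.fact L ∈ P1w → liftLit L ∈ S' := fun L hL =>
    liftLit_mem_of_idxLit_zero_mem hS'.2.1 ⟨0, two_pos, _, hL, .inl rfl⟩
      (idxLit_mem_of_not_rej_mem hS'.2.1 two_pos hL rfl (by simp [Rule.fact])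
        (fun _ h => h.elim) (hnot_rej _ hL))
  exact hS'.1 (.base true) ⟨hlift _ (Set.mem_insert _ _), hlift _ (Set.mem_insert_of_mem _ rfl)⟩
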